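/- arXiv:2510.19726 — 4 statements merged into one kernel-verified Lean document; each statement's English description precedes it below -/
import Mathlib

section
/- Let X ~ Hypergeometric(N,K,n) with 0 < K < N and 0 < n ≤ N. Then for every integer d with d ≥ nK/N + 1 and d ≤ n, Pr[X ≥ d] ≤ exp(−n·D(d/n ∥ K/N)), where D(x∥y) = x·ln(x/y) + (1−x)·ln((1−x)/(1−y)) is the binary Kullback–Leibler divergence. -/
open Finset

/-- Binomial coefficient on integers, zero when `b < 0` or `b > a`. -/
def zchoose (a b : ℤ) : ℤ :=
  if 0 ≤ b ∧ b ≤ a then (a.toNat).choose b.toNat else 0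

/-- Hypergeometric pmf `f(k; N, K, n) = C(K,k) C(N-K, n-k) / C(N,n)`. -/
noncomputable def hypPMF (N K n k : ℤ) : ℝ :=
  ((zchoose K k * zchoose (N - K) (n - k) : ℤ) : ℝ) / ((zchoose N n : ℤ) : ℝ)

/-- Upper tail `Pr[X ≥ d]` for `X ~ Hypergeometric(N, K, n)`. -/
noncomputable def hypTail (N K n d : ℤ) : ℝ :=
  ∑' k : ℤ, if d ≤ k then hypPMF N K n k else 0

/-- Binary Kullback–Leibler divergence `D(x ‖ y)`. -/
noncomputable def klBer (x y : ℝ) : ℝ :=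
  x * Real.log (x / y) + (1 - x) * Real.log ((1 - x) / (1 - y))


lemma descFact_ineq (K N : ℕ) (hKN : K ≤ N) : ∀ j, K.descFactorial j * N^j ≤ N.descFactorial j * K^j := by
  intro j
  induction j with
  | zero => simp
  | succ j ih =>
    rw [Nat.descFactorial_succ, Nat.descFactorial_succ, pow_succ, pow_succ]
    calc (K - j) * K.descFactorial j * (N ^ j * N)
        = (K - j) * N * (K.descFactorial j * N ^ j) := by ring
      _ ≤ (N - j) * K * (N.descFactorial j * K ^ j) := by
          apply Nat.mul_le_mul _ ih
          calc (K - j) * N = K * N - j * N := by rw [Nat.sub_mul]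
            _ ≤ K * N - j * K := Nat.sub_le_sub_left (Nat.mul_le_mul_left j hKN) _
            _ = (N - j) * K := by rw [Nat.sub_mul, Nat.mul_comm K N]
      _ = (N - j) * N.descFactorial j * (K ^ j * K) := by ring

lemma choose_ratio_nat (K N j : ℕ) (hKN : K ≤ N) : K.choose j * N^j ≤ N.choose j * K^j := by
  have h := descFact_ineq K N hKN j
  rw [Nat.descFactorial_eq_factorial_mul_choose, Nat.descFactorial_eq_factorial_mul_choose,
    mul_assoc, mul_assoc] at h
  exact Nat.le_of_mul_le_mul_left h (Nat.factorial_pos j)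

-- real version
lemma choose_ratio (K N j : ℕ) (hKN : K ≤ N) (hN : 0 < N) :
    (K.choose j : ℝ) ≤ (N.choose j : ℝ) * ((K : ℝ) / N)^j := by
  have hNj : (0:ℝ) < (N:ℝ)^j := by positivity
  rw [div_pow, ← mul_div_assoc, le_div_iff₀ hNj]
  exact_mod_cast choose_ratio_nat K N j hKN

lemma vandermonde' (a b c : ℕ) :
    ∑ m ∈ range (c+1), a.choose m * b.choose (c-m) = (a+b).choose c := by
  rw [Nat.add_choose_eq, Finset.Nat.sum_antidiagonal_eq_sum_range_succ_mk]

lemma choose_chain (K j m : ℕ) :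
    K.choose (j+m) * (j+m).choose j = K.choose j * (K-j).choose m := by
  by_cases h : j + m ≤ K
  · have := Nat.choose_mul (n := K) (Nat.le_add_right j m)
    simpa using this
  · rw [Nat.choose_eq_zero_of_lt (by omega), zero_mul]
    by_cases hj : j ≤ K
    · rw [Nat.choose_eq_zero_of_lt (show K - j < m by omega), mul_zero]
    · rw [Nat.choose_eq_zero_of_lt (show K < j by omega), zero_mul]

lemma sum_choose_id (N K n j : ℕ) (hKN : K ≤ N) (hjn : j ≤ n) :
    ∑ k ∈ range (n+1), K.choose k * (N-K).choose (n-k) * k.choose j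
      = K.choose j * (N-j).choose (n-j) := by
  have h1 : ∑ k ∈ range (n+1), K.choose k * (N-K).choose (n-k) * k.choose j
      = ∑ k ∈ Ico j (n+1), K.choose k * (N-K).choose (n-k) * k.choose j := by
    rw [range_eq_Ico]
    refine (Finset.sum_subset (Finset.Ico_subset_Ico (Nat.zero_le j) le_rfl) ?_).symm
    intro k hk1 hk
    simp only [mem_Ico] at hk1 hk
    have : k < j := by omega
    rw [Nat.choose_eq_zero_of_lt this, mul_zero]
  rw [h1, Finset.sum_Ico_eq_sum_range]
  have h2 : n + 1 - j = (n - j) + 1 := by omega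
  rw [h2]
  have h3 : ∀ m ∈ range ((n-j)+1), K.choose (j+m) * (N-K).choose (n-(j+m)) * (j+m).choose j
      = K.choose j * ((K-j).choose m * (N-K).choose ((n-j)-m)) := by
    intro m _
    have hnm : n - (j+m) = (n-j) - m := by omega
    rw [hnm, mul_right_comm, choose_chain]
    ring
  rw [Finset.sum_congr rfl h3, ← Finset.mul_sum]
  by_cases hj : j ≤ K
  · rw [vandermonde']
    congr 2
    omega
  · rw [Nat.choose_eq_zero_of_lt (by omega), zero_mul, zero_mul]

lemma one_add_pow (s : ℝ) (k n : ℕ) (hkn : k ≤ n) :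
    (1 + s)^k = ∑ j ∈ range (n+1), (k.choose j : ℝ) * s^j := by
  rw [add_comm, add_pow]
  simp only [one_pow, mul_one]
  rw [← Finset.sum_subset (Finset.range_subset_range.2 (by omega) : range (k+1) ⊆ range (n+1))]
  · exact Finset.sum_congr rfl (fun j _ => by ring)
  · intro j _ hj
    simp only [mem_range, not_lt] at hj
    rw [Nat.choose_eq_zero_of_lt (by omega), Nat.cast_zero, zero_mul]

lemma core_bound (N K n : ℕ) (hKN : K ≤ N) (hnN : n ≤ N) (hN : 0 < N) (s : ℝ) (hs : 0 ≤ s) :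
    ∑ k ∈ range (n+1), (K.choose k * (N-K).choose (n-k) : ℝ) * (1+s)^k
      ≤ (N.choose n : ℝ) * (1 + (K/N)*s)^n := by
  have step1 : ∑ k ∈ range (n+1), (K.choose k * (N-K).choose (n-k) : ℝ) * (1+s)^k
      = ∑ j ∈ range (n+1), (K.choose j * (N-j).choose (n-j) : ℝ) * s^j := by
    have : ∀ k ∈ range (n+1), (K.choose k * (N-K).choose (n-k) : ℝ) * (1+s)^k
        = ∑ j ∈ range (n+1), (K.choose k * (N-K).choose (n-k) * k.choose j : ℝ) * s^j := by
      intro k hk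
      simp only [mem_range] at hk
      rw [one_add_pow s k n (by omega), Finset.mul_sum]
      exact Finset.sum_congr rfl (fun j _ => by push_cast; ring)
    rw [Finset.sum_congr rfl this, Finset.sum_comm]
    refine Finset.sum_congr rfl (fun j hj => ?_)
    simp only [mem_range] at hj
    rw [← Finset.sum_mul]
    congr 1
    have hID := sum_choose_id N K n j hKN (by omega)
    calc ∑ i ∈ range (n+1), (K.choose i : ℝ) * ((N-K).choose (n-i)) * (i.choose j)
        = ((∑ i ∈ range (n+1), K.choose i * (N-K).choose (n-i) * i.choose j : ℕ) : ℝ) := by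
          push_cast; rfl
      _ = (K.choose j * (N-j).choose (n-j) : ℝ) := by rw [hID]; push_cast; rfl
  rw [step1]
  have step2 : ∀ j ∈ range (n+1), (K.choose j * (N-j).choose (n-j) : ℝ) * s^j
      ≤ (N.choose n : ℝ) * ((n.choose j : ℝ) * ((K/N)*s)^j) := by
    intro j hj
    simp only [mem_range] at hj
    have hid : (N.choose n : ℝ) * (n.choose j) = (N.choose j : ℝ) * ((N-j).choose (n-j)) := by
      exact_mod_cast congrArg (Nat.cast : ℕ → ℝ) (Nat.choose_mul (n := N) (k := n) (s := j) (by omega))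
    have h2 : (K.choose j : ℝ) ≤ (N.choose j : ℝ) * ((K : ℝ) / N)^j := by
      have hNj : (0:ℝ) < (N:ℝ)^j := by positivity
      rw [div_pow, ← mul_div_assoc, le_div_iff₀ hNj]
      exact_mod_cast choose_ratio_nat K N j hKN
    calc (K.choose j * (N-j).choose (n-j) : ℝ) * s^j
        ≤ ((N.choose j : ℝ) * ((K : ℝ) / N)^j * (N-j).choose (n-j)) * s^j := by
          apply mul_le_mul_of_nonneg_right _ (by positivity)
          push_cast
          exact mul_le_mul_of_nonneg_right h2 (by positivity)
      _ = (N.choose n : ℝ) * ((n.choose j : ℝ) * ((K/N)*s)^j) := by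
          rw [mul_pow]
          linear_combination (-(((K:ℝ)/N)^j * s^j)) * hid
  calc ∑ j ∈ range (n+1), (K.choose j * (N-j).choose (n-j) : ℝ) * s^j
      ≤ ∑ j ∈ range (n+1), (N.choose n : ℝ) * ((n.choose j : ℝ) * ((K/N)*s)^j) :=
        Finset.sum_le_sum step2
    _ = (N.choose n : ℝ) * (1 + (K/N)*s)^n := by
        rw [← Finset.mul_sum, one_add_pow ((K/N)*s) n n le_rfl]


lemma tail_pow (N K n d : ℕ) (hKN : K ≤ N) (hnN : n ≤ N) (hN : 0 < N) (hdn : d ≤ n)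
    (t : ℝ) (ht : 1 ≤ t) :
    (∑ k ∈ Icc d n, (K.choose k * (N-K).choose (n-k) : ℝ)) * t^d
      ≤ (N.choose n : ℝ) * (1 + (K/N)*(t-1))^n := by
  have ht0 : (0:ℝ) ≤ t := le_trans zero_le_one ht
  rw [Finset.sum_mul]
  calc ∑ k ∈ Icc d n, (K.choose k * (N-K).choose (n-k) : ℝ) * t^d
      ≤ ∑ k ∈ Icc d n, (K.choose k * (N-K).choose (n-k) : ℝ) * t^k := by
        refine Finset.sum_le_sum (fun k hk => ?_)
        simp only [mem_Icc] at hk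
        exact mul_le_mul_of_nonneg_left (pow_le_pow_right₀ ht hk.1) (by positivity)
    _ ≤ ∑ k ∈ range (n+1), (K.choose k * (N-K).choose (n-k) : ℝ) * t^k := by
        refine Finset.sum_le_sum_of_subset_of_nonneg ?_ (fun k _ _ => by positivity)
        intro k hk
        simp only [mem_Icc, mem_range] at hk ⊢
        omega
    _ ≤ (N.choose n : ℝ) * (1 + (K/N)*(t-1))^n := by
        have := core_bound N K n hKN hnN hN (t-1) (by linarith)
        simpa using this

theorem natMain (N K n d : ℕ) (hK0 : 0 < K) (hKN : K < N) (hn0 : 0 < n) (hnN : n ≤ N)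
    (hd : (n:ℝ)*K/N + 1 ≤ d) (hdn : d ≤ n) :
    ∑ k ∈ Icc d n, (K.choose k * (N-K).choose (n-k) : ℝ) / (N.choose n)
      ≤ Real.exp (-(n:ℝ) * klBer ((d:ℝ)/n) ((K:ℝ)/N)) := by
  have hNpos : (0:ℝ) < N := by exact_mod_cast (hK0.trans hKN)
  have hnpos : (0:ℝ) < n := by exact_mod_cast hn0
  set p : ℝ := (K:ℝ)/N with hp
  set x : ℝ := (d:ℝ)/n with hxdef
  have hp0 : 0 < p := by positivity
  have hp1 : p < 1 := by rw [hp, div_lt_one hNpos]; exact_mod_cast hKN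
  have hdx : (d:ℝ) = n * x := by rw [hxdef]; field_simp
  have hxp : p < x := by
    have : (n:ℝ)*p < d := by rw [hp]; rw [mul_div_assoc] at hd; linarith
    rw [hxdef, lt_div_iff₀ hnpos]; linarith
  have hx1 : x ≤ 1 := by
    rw [hxdef, div_le_one hnpos]; exact_mod_cast hdn
  have hCpos : (0:ℝ) < (N.choose n : ℝ) := by
    exact_mod_cast Nat.choose_pos hnN
  have hsum_div : ∑ k ∈ Icc d n, (K.choose k * (N-K).choose (n-k) : ℝ) / (N.choose n)
      = (∑ k ∈ Icc d n, (K.choose k * (N-K).choose (n-k) : ℝ)) / (N.choose n) := by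
    rw [Finset.sum_div]
  rw [hsum_div]
  rcases eq_or_lt_of_le hdn with hdeq | hdlt
  · -- d = n case
    subst hdeq
    have hx1' : x = 1 := by rw [hxdef, div_self (ne_of_gt hnpos)]
    rw [Finset.Icc_self, Finset.sum_singleton, Nat.sub_self, Nat.choose_zero_right]
    have hkl : klBer x p = -Real.log p := by
      rw [hx1']; unfold klBer
      simp [Real.log_div, Real.log_inv, one_div]
    rw [hkl]
    have : Real.exp (-(d:ℝ) * -Real.log p) = p ^ d := by
      rw [neg_mul_neg, Real.exp_nat_mul, Real.exp_log hp0]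
    rw [this]
    rw [div_le_iff₀ hCpos, Nat.cast_one, mul_one]
    calc (K.choose d : ℝ) ≤ (N.choose d : ℝ) * p ^ d := by
          have hNj : (0:ℝ) < (N:ℝ)^d := by positivity
          rw [hp, div_pow, ← mul_div_assoc, le_div_iff₀ hNj]
          exact_mod_cast choose_ratio_nat K N d hKN.le
      _ = p ^ d * (N.choose d : ℝ) := by ring
  · -- d < n case
    have hx1' : x < 1 := by rw [hxdef, div_lt_one hnpos]; exact_mod_cast hdlt
    set q : ℝ := 1 - p with hq
    have hq0 : 0 < q := by simp [hq]; linarith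
    have h1x : 0 < 1 - x := by linarith
    have hx0 : 0 < x := lt_trans hp0 hxp
    set t : ℝ := x * q / ((1-x) * p) with htdef
    have htden : 0 < (1-x)*p := by positivity
    have ht0 : 0 < t := by positivity
    have ht1 : 1 ≤ t := by
      rw [htdef, le_div_iff₀ htden]
      nlinarith
    have key := tail_pow N K n d hKN.le hnN (hK0.trans hKN) hdn t ht1
    have hqpt : 1 + p*(t-1) = q/(1-x) := by
      rw [htdef, hq]; field_simp; ring
    have htd : (0:ℝ) < t^d := by positivity
    have step : (∑ k ∈ Icc d n, (K.choose k * (N-K).choose (n-k) : ℝ)) / (N.choose n)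
        ≤ (q/(1-x))^n / t^d := by
      rw [div_le_div_iff₀ hCpos htd]
      rw [hqpt] at key
      linarith
    refine step.trans (le_of_eq ?_)
    have e1 : (q/(1-x))^n = Real.exp (n * Real.log (q/(1-x))) := by
      rw [Real.exp_nat_mul, Real.exp_log (by positivity)]
    have e2 : t^d = Real.exp (d * Real.log t) := by
      rw [Real.exp_nat_mul, Real.exp_log ht0]
    rw [e1, e2, ← Real.exp_sub]
    congr 1
    rw [Real.log_div hq0.ne' h1x.ne', htdef,
      Real.log_div (by positivity : (0:ℝ) < x*q).ne' htden.ne',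
      Real.log_mul hx0.ne' hq0.ne', Real.log_mul h1x.ne' hp0.ne']
    unfold klBer
    rw [Real.log_div hx0.ne' hp0.ne', Real.log_div h1x.ne' (by rw [← hq]; exact hq0.ne')]
    rw [hdx]
    ring




lemma zchoose_neg (a b : ℤ) (hb : b < 0) : zchoose a b = 0 := if_neg (by omega)

lemma zchoose_nat (a b : ℕ) : zchoose (a:ℤ) (b:ℤ) = (a.choose b : ℤ) := by
  unfold zchoose
  split
  · simp
  · rename_i h
    push_neg at h
    have : a < b := by omega
    rw [Nat.choose_eq_zero_of_lt this, Nat.cast_zero]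

theorem hypergeometric_chernoff (N K n : ℤ) (hK0 : 0 < K) (hKN : K < N)
    (hn0 : 0 < n) (hnN : n ≤ N) (d : ℤ)
    (hd : ((n : ℝ) * K / N) + 1 ≤ (d : ℝ)) (hdn : d ≤ n) :
    hypTail N K n d ≤ Real.exp (-(n : ℝ) * klBer ((d : ℝ) / n) ((K : ℝ) / N)) := by
  have hd1 : 1 ≤ d := by
    have hpos : (0:ℝ) < (n:ℝ) * K / N := by
      have h1 : (0:ℝ) < (n:ℝ) := by exact_mod_cast hn0
      have h2 : (0:ℝ) < (K:ℝ) := by exact_mod_cast hK0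
      have h3 : (0:ℝ) < (N:ℝ) := by exact_mod_cast hK0.trans hKN
      positivity
    have : (1:ℝ) ≤ (d:ℝ) := by linarith
    exact_mod_cast this
  obtain ⟨N', rfl⟩ : ∃ m : ℕ, N = (m:ℤ) := ⟨N.toNat, by omega⟩
  obtain ⟨K', rfl⟩ : ∃ m : ℕ, K = (m:ℤ) := ⟨K.toNat, by omega⟩
  obtain ⟨n', rfl⟩ : ∃ m : ℕ, n = (m:ℤ) := ⟨n.toNat, by omega⟩
  obtain ⟨d', rfl⟩ : ∃ m : ℕ, d = (m:ℤ) := ⟨d.toNat, by omega⟩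
  have hfin : ∀ k : ℤ, k ∉ Finset.Icc ((d':ℕ):ℤ) ((n':ℕ):ℤ) →
      (if ((d':ℕ):ℤ) ≤ k then hypPMF N' K' n' k else 0) = 0 := by
    intro k hk
    simp only [Finset.mem_Icc, not_and, not_le] at hk
    by_cases h : ((d':ℕ):ℤ) ≤ k
    · rw [if_pos h]
      have hnk : ((n':ℕ):ℤ) < k := hk h
      unfold hypPMF
      rw [zchoose_neg ((N':ℤ) - K') ((n':ℤ) - k) (by omega)]
      simp
    · rw [if_neg h]
  have htail : hypTail N' K' n' d' = ∑ k ∈ Finset.Icc ((d':ℕ):ℤ) ((n':ℕ):ℤ),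
      (if ((d':ℕ):ℤ) ≤ k then hypPMF N' K' n' k else 0) := by
    unfold hypTail
    exact tsum_eq_sum hfin
  rw [htail]
  have hsum : ∑ k ∈ Finset.Icc ((d':ℕ):ℤ) ((n':ℕ):ℤ),
      (if ((d':ℕ):ℤ) ≤ k then hypPMF N' K' n' k else 0)
      = ∑ k ∈ Finset.Icc d' n', (K'.choose k * (N'-K').choose (n'-k) : ℝ) / (N'.choose n') := by
    refine Finset.sum_nbij' (fun k => k.toNat) (fun m => (m:ℤ)) ?_ ?_ ?_ ?_ ?_
    · intro a ha; simp only [Finset.mem_Icc] at ha ⊢; omega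
    · intro a ha; simp only [Finset.mem_Icc] at ha ⊢; omega
    · intro a ha; simp only [Finset.mem_Icc] at ha
      show ((a.toNat : ℕ) : ℤ) = a; omega
    · intro a _; simp
    · intro k hk
      simp only [Finset.mem_Icc] at hk
      rw [if_pos hk.1]
      unfold hypPMF
      obtain ⟨m, rfl⟩ : ∃ m : ℕ, k = (m:ℤ) := ⟨k.toNat, by omega⟩
      have e1 : (N':ℤ) - K' = ((N' - K' : ℕ) : ℤ) := by
        have : K' ≤ N' := by exact_mod_cast hKN.le
        omega
      have e2 : (n':ℤ) - m = ((n' - m : ℕ) : ℤ) := by omega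
      rw [e1, e2, zchoose_nat, zchoose_nat, zchoose_nat]
      push_cast
      simp
  rw [hsum]
  have hKN' : K' < N' := by exact_mod_cast hKN
  have hK0' : 0 < K' := by exact_mod_cast hK0
  have hn0' : 0 < n' := by exact_mod_cast hn0
  have hnN' : n' ≤ N' := by exact_mod_cast hnN
  have hdn' : d' ≤ n' := by exact_mod_cast hdn
  have hd' : (n':ℝ)*K'/N' + 1 ≤ (d':ℝ) := by push_cast at hd ⊢; exact hd
  have := natMain N' K' n' d' hK0' hKN' hn0' hnN' hd' hdn'
  push_cast at this ⊢
  exact this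
end

section
/- Let X ~ Hypergeometric(N,K,n) with 0 < K ≤ N, 0 < n < N. Then for every integer d with d ≥ nK/N + 1 and d ≤ K, Pr[X ≥ d] ≤ exp(−K·D(d/K ∥ n/N)), where D is the binary Kullback–Leibler divergence. -/
open Finset
open Real

lemma convexOn_exp_mul (s : ℝ) : ConvexOn ℝ Set.univ (fun x : ℝ => Real.exp (x * s)) := by
  have h := convexOn_exp.comp_affineMap (LinearMap.toSpanSingleton ℝ ℝ s).toAffineMap
  simpa [Function.comp_def, LinearMap.toSpanSingleton, smul_eq_mul] using h

lemma exp_comb_le {A B c s σ : ℝ} (hA : 0 ≤ A) (hB : 0 ≤ B) {M : ℕ}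
    (h0 : A + B ≤ c)
    (hM : A * Real.exp (M * s) + B * Real.exp (-(M * σ)) ≤ c)
    {m : ℕ} (hm : m ≤ M) :
    A * Real.exp (m * s) + B * Real.exp (-(m * σ)) ≤ c := by
  have hconv : ConvexOn ℝ Set.univ
      (fun x : ℝ => A * Real.exp (x * s) + B * Real.exp (x * (-σ))) :=
    ((convexOn_exp_mul s).smul hA).add ((convexOn_exp_mul (-σ)).smul hB)
  have hseg : (m : ℝ) ∈ segment ℝ (0 : ℝ) (M : ℝ) := by
    rw [segment_eq_Icc (by positivity)]
    exact ⟨by positivity, by exact_mod_cast hm⟩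
  have h := hconv.le_on_segment (Set.mem_univ 0) (Set.mem_univ (M : ℝ)) hseg
  simp only [zero_mul, Real.exp_zero, mul_one] at h
  have h2 : A * Real.exp ((m:ℝ) * s) + B * Real.exp ((m:ℝ) * (-σ)) ≤ c := by
    refine h.trans (max_le h0 ?_)
    calc A * Real.exp ((M:ℝ) * s) + B * Real.exp ((M:ℝ) * (-σ)) 
        = A * Real.exp (M * s) + B * Real.exp (-(M * σ)) := by ring_nf
      _ ≤ c := hM
  calc A * Real.exp (m * s) + B * Real.exp (-(m * σ)) 
      = A * Real.exp ((m:ℝ) * s) + B * Real.exp ((m:ℝ) * (-σ)) := by ring_nf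
    _ ≤ c := h2


lemma core_ineq {p q u t : ℝ} (hp : 0 < p) (hq : 0 < q) (hpq : p + q = 1)
    (hu : 0 ≤ u) (ht : 0 ≤ t) (hb : 0 ≤ 1 + p * u - q * t)
    {M : ℕ} (hMt : (M : ℝ) * t = u) {m : ℕ} (hm : m ≤ M) :
    q * (1 + p * u + p * t) ^ m + p * (1 + u) * (1 + p * u - q * t) ^ m
      ≤ (1 + p * u) ^ (m + 1) := by
  set c : ℝ := 1 + p * u with hc
  have hc0 : 0 < c := by positivity
  have hcm : (0:ℝ) < c ^ m := by positivity
  set s : ℝ := p * t / c with hs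
  set σ : ℝ := q * t / c with hσ
  have hs0 : 0 ≤ s := by positivity
  have hσ0 : 0 ≤ σ := by positivity
  have ha : (c + p * t) ^ m ≤ c ^ m * Real.exp ((m : ℝ) * s) := by
    have h1 : c + p * t = c * (1 + s) := by rw [hs]; field_simp
    have h2 : 1 + s ≤ Real.exp s := by have := Real.add_one_le_exp s; linarith
    calc (c + p * t) ^ m = c ^ m * (1 + s) ^ m := by rw [h1, mul_pow]
      _ ≤ c ^ m * Real.exp s ^ m := by gcongr <;> positivity
      _ = c ^ m * Real.exp ((m : ℝ) * s) := by rw [← Real.exp_nat_mul]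
  have hbb : (c - q * t) ^ m ≤ c ^ m * Real.exp (-((m : ℝ) * σ)) := by
    have h1 : c - q * t = c * (1 - σ) := by rw [hσ]; field_simp
    have h2 : 1 - σ ≤ Real.exp (-σ) := by have := Real.add_one_le_exp (-σ); linarith
    have h3 : 0 ≤ 1 - σ := by
      have h4 : 0 ≤ c * (1 - σ) := by rw [← h1]; linarith
      nlinarith
    calc (c - q * t) ^ m = c ^ m * (1 - σ) ^ m := by rw [h1, mul_pow]
      _ ≤ c ^ m * Real.exp (-σ) ^ m := by gcongr
      _ = c ^ m * Real.exp (-((m : ℝ) * σ)) := by rw [← Real.exp_nat_mul]; ring_nf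
  have hMs : (M : ℝ) * s = p * u / c := by rw [hs, ← hMt]; ring
  have hMσ : (M : ℝ) * σ = q * u / c := by rw [hσ, ← hMt]; ring
  have hexp1 : Real.exp ((M : ℝ) * s) ≤ c := by
    rw [hMs]
    have h1 : 1 - p * u / c ≤ Real.exp (-(p * u / c)) := by
      have := Real.add_one_le_exp (-(p * u / c)); linarith
    have h2 : 1 - p * u / c = 1 / c := by field_simp; linarith [hc]
    have h3 : 1 / c ≤ Real.exp (-(p * u / c)) := h2 ▸ h1
    have h4 : (Real.exp (-(p * u / c)))⁻¹ ≤ (1 / c)⁻¹ := by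
      apply inv_anti₀ (by positivity) h3
    rw [Real.exp_neg, inv_inv] at h4
    simpa using h4
  have hexp2 : Real.exp (-((M : ℝ) * σ)) ≤ c / (1 + u) := by
    rw [hMσ]
    have h1 : 1 + q * u / c ≤ Real.exp (q * u / c) := by
      have := Real.add_one_le_exp (q * u / c); linarith
    have h2 : 1 + q * u / c = (1 + u) / c := by field_simp; nlinarith [hpq]
    have h3 : (1 + u) / c ≤ Real.exp (q * u / c) := h2 ▸ h1
    have h4 : (Real.exp (q * u / c))⁻¹ ≤ ((1 + u) / c)⁻¹ := by
      apply inv_anti₀ (by positivity) h3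
    rw [← Real.exp_neg] at h4
    calc Real.exp (-(q * u / c)) ≤ ((1 + u) / c)⁻¹ := h4
      _ = c / (1 + u) := by rw [inv_div]
  have hcomb : q * Real.exp ((m : ℝ) * s) + (p * (1 + u)) * Real.exp (-((m : ℝ) * σ)) ≤ c := by
    apply exp_comb_le hq.le (by positivity) _ _ hm
    · linarith
    · have e1 : q * Real.exp ((M : ℝ) * s) ≤ q * c := by
        exact mul_le_mul_of_nonneg_left hexp1 hq.le
      have e2 : (p * (1 + u)) * Real.exp (-((M : ℝ) * σ)) ≤ p * c := by
        calc (p * (1 + u)) * Real.exp (-((M : ℝ) * σ)) ≤ (p * (1 + u)) * (c / (1 + u)) := by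
              apply mul_le_mul_of_nonneg_left hexp2 (by positivity)
          _ = p * c := by
              have h1u : (0:ℝ) < 1 + u := by linarith
              field_simp
      nlinarith
  calc q * (1 + p * u + p * t) ^ m + p * (1 + u) * (1 + p * u - q * t) ^ m
      = q * (c + p * t) ^ m + (p * (1 + u)) * (c - q * t) ^ m := by rw [hc]
    _ ≤ q * (c ^ m * Real.exp ((m : ℝ) * s)) + (p * (1 + u)) * (c ^ m * Real.exp (-((m : ℝ) * σ))) := by
        gcongr
    _ = c ^ m * (q * Real.exp ((m : ℝ) * s) + (p * (1 + u)) * Real.exp (-((m : ℝ) * σ))) := by ring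
    _ ≤ c ^ m * c := by exact mul_le_mul_of_nonneg_left hcomb hcm.le
    _ = c ^ (m + 1) := by ring

lemma step_choose (N n' K' : ℕ) (hn'1 : n' + 1 ≤ N) (hK' : K' ≤ N) (u : ℝ) (hu : 0 ≤ u) :
    (N.choose (n'+1) : ℝ) * (1 + ((n':ℝ)+1)/(N:ℝ) * u) ^ K'
    + (1+u) * ((N.choose n' : ℝ) * (1 + (n':ℝ)/(N:ℝ) * u) ^ K')
    ≤ ((N+1).choose (n'+1) : ℝ) * (1 + ((n':ℝ)+1)/((N:ℝ)+1) * u) ^ (K'+1) := by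
  have hN0 : (0:ℝ) < (N:ℝ) := by
    have : 0 < N := by omega
    exact_mod_cast this
  have hN1 : (0:ℝ) < (N:ℝ) + 1 := by linarith
  set p : ℝ := ((n':ℝ)+1)/((N:ℝ)+1) with hp
  set q : ℝ := 1 - p with hq
  set t : ℝ := u / (N:ℝ) with ht
  set C : ℝ := ((N+1).choose (n'+1) : ℝ) with hC
  have hC0 : (0:ℝ) ≤ C := by positivity
  have hpq : p + q = 1 := by rw [hq]; ring
  have hp0 : 0 < p := by rw [hp]; positivity
  have hn'N : (n':ℝ) + 1 < (N:ℝ) + 1 := by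
    have : (n':ℝ) + 1 ≤ (N:ℝ) := by exact_mod_cast hn'1
    linarith
  have hq0 : 0 < q := by
    rw [hq, hp, sub_pos, div_lt_one hN1]
    exact hn'N
  have ht0 : 0 ≤ t := by rw [ht]; positivity
  have hMt : (N:ℝ) * t = u := by rw [ht]; field_simp
  have hY : 1 + (n':ℝ)/(N:ℝ) * u = 1 + p * u - q * t := by
    rw [hp, hq, ht, hp]; field_simp; ring
  have hX : 1 + ((n':ℝ)+1)/(N:ℝ) * u = 1 + p * u + p * t := by
    rw [hp, ht]; field_simp; ring
  have hb : 0 ≤ 1 + p * u - q * t := by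
    rw [← hY]; positivity
  have hchoosePascal : C = (N.choose n' : ℝ) + (N.choose (n'+1) : ℝ) := by
    rw [hC]; exact_mod_cast Nat.choose_succ_succ N n'
  have hmul : ((N:ℝ)+1) * (N.choose n' : ℝ) = C * ((n':ℝ)+1) := by
    rw [hC]; exact_mod_cast Nat.add_one_mul_choose_eq N n'
  have hCp : (N.choose n' : ℝ) = C * p := by
    rw [hp]; rw [mul_div_assoc', eq_div_iff hN1.ne']
    linear_combination hmul
  have hCq : (N.choose (n'+1) : ℝ) = C * q := by
    rw [hq, mul_sub, mul_one]
    linarith [hchoosePascal, hCp]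
  calc (N.choose (n'+1) : ℝ) * (1 + ((n':ℝ)+1)/(N:ℝ) * u) ^ K'
      + (1+u) * ((N.choose n' : ℝ) * (1 + (n':ℝ)/(N:ℝ) * u) ^ K')
      = C * (q * (1 + p * u + p * t) ^ K' + p * (1+u) * (1 + p * u - q * t) ^ K') := by
        rw [hX, hY, hCq, hCp]; ring
    _ ≤ C * (1 + p * u) ^ (K'+1) :=
        mul_le_mul_of_nonneg_left (core_ineq hp0 hq0 hpq hu ht0 hb hMt hK') hC0


noncomputable def Sfun (N K n : ℕ) (l : ℝ) : ℝ :=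
  ∑ k ∈ Finset.range (n+1), (K.choose k : ℝ) * ((N-K).choose (n-k) : ℝ) * l ^ k

lemma Sfun_rec (N K n : ℕ) (l : ℝ) :
    Sfun (N+1) (K+1) (n+1) l = Sfun N K (n+1) l + l * Sfun N K n l := by
  unfold Sfun
  rw [Finset.sum_range_succ'
        (fun k => ((K+1).choose k : ℝ) * (((N+1)-(K+1)).choose ((n+1)-k) : ℝ) * l ^ k) (n+1),
      Finset.sum_range_succ'
        (fun k => (K.choose k : ℝ) * ((N-K).choose ((n+1)-k) : ℝ) * l ^ k) (n+1),
      Finset.mul_sum]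
  simp only [Nat.succ_sub_succ, Nat.sub_zero, Nat.choose_zero_right]
  have key : ∀ k ∈ Finset.range (n+1),
      ((K+1).choose (k+1) : ℝ) * ((N-K).choose (n-k) : ℝ) * l ^ (k+1)
      = (K.choose (k+1) : ℝ) * ((N-K).choose (n-k) : ℝ) * l ^ (k+1)
        + (K.choose k : ℝ) * ((N-K).choose (n-k) : ℝ) * l ^ k * l := by
    intro k _
    have h : ((K+1).choose (k+1) : ℝ) = (K.choose k : ℝ) + (K.choose (k+1) : ℝ) := by
      exact_mod_cast (Nat.choose_succ_succ K k)
    rw [h]; ring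
  rw [Finset.sum_congr rfl key, Finset.sum_add_distrib]
  have h2 : ∀ x ∈ Finset.range (n+1),
      (K.choose x : ℝ) * ((N-K).choose (n-x) : ℝ) * l ^ x * l
      = l * ((K.choose x : ℝ) * ((N-K).choose (n-x) : ℝ) * l ^ x) := by
    intro x _; ring
  rw [Finset.sum_congr rfl h2]
  ring

lemma Sfun_le : ∀ (N K n : ℕ), K ≤ N → n ≤ N → ∀ l : ℝ, 1 ≤ l →
    Sfun N K n l ≤ (N.choose n : ℝ) * (1 + ((n:ℝ)/(N:ℝ)) * (l-1)) ^ K := by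
  intro N
  induction N with
  | zero =>
    intro K n hK hn l hl
    interval_cases K
    interval_cases n
    simp [Sfun]
  | succ N IH =>
    intro K n hK hn l hl
    have hl0 : (0:ℝ) < l := by linarith
    obtain _ | K' := K
    · have hS : Sfun (N+1) 0 n l = ((N+1).choose n : ℝ) := by
        unfold Sfun
        rw [Finset.sum_eq_single 0]
        · simp
        · intro b _ hb
          have hb0 : 0 < b := Nat.pos_of_ne_zero hb
          simp [Nat.choose_eq_zero_of_lt hb0]
        · intro h; exact absurd (Finset.mem_range.2 (Nat.succ_pos n)) h
      rw [hS, pow_zero, mul_one]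
    obtain _ | n' := n
    · have hS : Sfun (N+1) (K'+1) 0 l = 1 := by
        unfold Sfun; simp
      rw [hS]
      norm_num
    by_cases hnN : n' + 1 ≤ N
    · -- interior case: recursion + induction hypothesis + step inequality
      have hK' : K' ≤ N := by omega
      have hn' : n' ≤ N := by omega
      rw [Sfun_rec]
      have h1 := IH K' (n'+1) hK' hnN l hl
      have h2 := IH K' n' hK' hn' l hl
      have hstep := step_choose N n' K' hnN hK' (l-1) (by linarith)
      have hS2 : 0 ≤ (N.choose n' : ℝ) * (1 + ((n':ℝ)/(N:ℝ)) * (l-1)) ^ K' := by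
        have hbase : (0:ℝ) ≤ 1 + ((n':ℝ)/(N:ℝ)) * (l-1) := by
          have h0 : (0:ℝ) ≤ ((n':ℝ)/(N:ℝ)) * (l-1) :=
            mul_nonneg (by positivity) (by linarith)
          linarith
        exact mul_nonneg (by positivity) (pow_nonneg hbase _)
      calc Sfun N K' (n'+1) l + l * Sfun N K' n' l
          ≤ (N.choose (n'+1) : ℝ) * (1 + (((n'+1:ℕ)):ℝ)/(N:ℝ) * (l-1)) ^ K'
            + l * ((N.choose n' : ℝ) * (1 + ((n':ℝ)/(N:ℝ)) * (l-1)) ^ K') := by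
            push_cast
            push_cast at h1 h2
            exact add_le_add h1 (mul_le_mul_of_nonneg_left h2 hl0.le)
        _ ≤ ((N+1).choose (n'+1) : ℝ) * (1 + (((n'+1:ℕ)):ℝ)/(((N+1:ℕ)):ℝ) * (l-1)) ^ (K'+1) := by
            push_cast
            push_cast at hstep
            calc (N.choose (n'+1) : ℝ) * (1 + ((n':ℝ)+1)/(N:ℝ) * (l-1)) ^ K'
                + l * ((N.choose n' : ℝ) * (1 + ((n':ℝ)/(N:ℝ)) * (l-1)) ^ K')
                = (N.choose (n'+1) : ℝ) * (1 + ((n':ℝ)+1)/(N:ℝ) * (l-1)) ^ K'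
                + (1+(l-1)) * ((N.choose n' : ℝ) * (1 + ((n':ℝ)/(N:ℝ)) * (l-1)) ^ K') := by ring
              _ ≤ _ := hstep
    · -- boundary case n = N + 1
      have hn'N : n' = N := by omega
      subst hn'N
      have hZ : ((((n':ℕ)+1):ℝ))/((((n':ℕ)+1):ℝ)) = 1 := by
        have : ((n':ℝ)+1) ≠ 0 := by positivity
        push_cast
        field_simp
      have hS : Sfun (n'+1) (K'+1) (n'+1) l = l ^ (K'+1) := by
        unfold Sfun
        rw [Finset.sum_eq_single (K'+1)]
        · simp [Nat.choose_self]
        · intro b hb hbne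
          rcases lt_or_gt_of_ne hbne with hlt | hgt
          · have h1 : n' - K' < n' + 1 - b := by omega
            simp [Nat.choose_eq_zero_of_lt h1]
          · simp [Nat.choose_eq_zero_of_lt hgt]
        · intro h
          exact absurd (Finset.mem_range.2 (by omega)) h
      rw [hS]
      push_cast
      have hne : ((n':ℝ)+1) ≠ 0 := by positivity
      rw [Nat.choose_self]
      rw [div_self hne]
      norm_num

lemma zchoose_nonneg (a b : ℤ) : 0 ≤ zchoose a b := by
  unfold zchoose
  split
  · exact_mod_cast Nat.zero_le _
  · exact le_refl 0

lemma zchoose_eq_zero_of_neg (a b : ℤ) (h : b < 0) : zchoose a b = 0 := by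
  unfold zchoose
  rw [if_neg]
  rintro ⟨h1, -⟩
  omega

lemma zchoose_eq (a b : ℤ) (ha : 0 ≤ a) (hb : 0 ≤ b) :
    zchoose a b = (a.toNat.choose b.toNat : ℤ) := by
  unfold zchoose
  split
  · rfl
  · next h =>
    have hba : a < b := by
      rcases not_and_or.1 h with h1 | h1 <;> omega
    have : a.toNat < b.toNat := by omega
    rw [Nat.choose_eq_zero_of_lt this]
    rfl

lemma hypPMF_nonneg (N K n k : ℤ) : 0 ≤ hypPMF N K n k := by
  unfold hypPMF
  apply div_nonneg
  · exact_mod_cast mul_nonneg (zchoose_nonneg K k) (zchoose_nonneg (N-K) (n-k))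
  · exact_mod_cast zchoose_nonneg N n

lemma hypTail_eq_sum (N K n d : ℤ) :
    hypTail N K n d = ∑ k ∈ Finset.Icc d n, hypPMF N K n k := by
  unfold hypTail
  rw [tsum_eq_sum (s := Finset.Icc d n) ?_]
  · exact Finset.sum_congr rfl fun k hk => if_pos (Finset.mem_Icc.1 hk).1
  · intro k hk
    rw [Finset.mem_Icc, not_and_or, not_le, not_le] at hk
    by_cases h1 : d ≤ k
    · rw [if_pos h1]
      have h2 : n < k := by rcases hk with h | h <;> omega
      unfold hypPMF
      rw [zchoose_eq_zero_of_neg (N-K) (n-k) (by omega)]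
      simp
    · rw [if_neg h1]

lemma chernoff_bound (N K n d : ℤ) (hK0 : 0 < K) (hKN : K ≤ N) (hn0 : 0 < n) (hnN : n < N)
    (hd0 : 0 ≤ d) {l : ℝ} (hl : 1 ≤ l) :
    hypTail N K n d ≤ l ^ (-d) * (1 + ((n:ℝ)/(N:ℝ)) * (l - 1)) ^ K.toNat := by
  have hl0 : (0:ℝ) < l := by linarith
  have hN0 : (0:ℤ) < N := hn0.trans hnN
  rw [hypTail_eq_sum]
  have step1 : ∑ k ∈ Finset.Icc d n, hypPMF N K n k
      ≤ ∑ k ∈ Finset.Icc d n, hypPMF N K n k * l ^ (k - d) := by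
    apply Finset.sum_le_sum
    intro k hk
    have hkd : (0:ℤ) ≤ k - d := by have := (Finset.mem_Icc.1 hk).1; omega
    have h1 : (1:ℝ) ≤ l ^ (k - d) := one_le_zpow₀ hl hkd
    nlinarith [hypPMF_nonneg N K n k]
  have step2 : ∑ k ∈ Finset.Icc d n, hypPMF N K n k * l ^ (k - d)
      ≤ ∑ k ∈ Finset.Icc 0 n, hypPMF N K n k * l ^ (k - d) := by
    apply Finset.sum_le_sum_of_subset_of_nonneg (Finset.Icc_subset_Icc_left hd0)
    intro k _ _
    have := hypPMF_nonneg N K n k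
    positivity
  have step3 : ∑ k ∈ Finset.Icc (0:ℤ) n, hypPMF N K n k * l ^ (k - d)
      = l ^ (-d) * ∑ k ∈ Finset.Icc (0:ℤ) n, hypPMF N K n k * l ^ k.toNat := by
    rw [Finset.mul_sum]
    apply Finset.sum_congr rfl
    intro k hk
    have hk0 : (0:ℤ) ≤ k := (Finset.mem_Icc.1 hk).1
    have h2 : l ^ (k - d) = l ^ ((k.toNat : ℤ)) * l ^ (-d) := by
      rw [← zpow_add₀ hl0.ne']
      congr 1
      omega
    rw [h2, zpow_natCast]
    ring
  have step4 : ∑ k ∈ Finset.Icc (0:ℤ) n, hypPMF N K n k * l ^ k.toNat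
      = ∑ j ∈ Finset.range (n.toNat + 1), hypPMF N K n j * l ^ j := by
    refine Finset.sum_nbij' (i := fun k : ℤ => k.toNat) (j := fun j : ℕ => (j : ℤ)) ?_ ?_ ?_ ?_ ?_
    · intro a ha
      rw [Finset.mem_Icc] at ha
      simp only [Finset.mem_range]
      omega
    · intro a ha
      simp only [Finset.mem_range] at ha
      simp only [Finset.mem_Icc]
      omega
    · intro a ha
      rw [Finset.mem_Icc] at ha
      show ((a.toNat : ℕ) : ℤ) = a
      omega
    · intro a _
      show ((a : ℤ)).toNat = a
      omega
    · intro a ha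
      rw [Finset.mem_Icc] at ha
      show hypPMF N K n a * l ^ a.toNat = hypPMF N K n ((a.toNat : ℕ) : ℤ) * l ^ a.toNat
      rw [Int.toNat_of_nonneg ha.1]
  have hnN' : n.toNat ≤ N.toNat := by omega
  have hKN' : K.toNat ≤ N.toNat := by omega
  have hCpos : (0:ℝ) < (N.toNat.choose n.toNat : ℝ) := by
    exact_mod_cast Nat.choose_pos hnN'
  have step5 : ∑ j ∈ Finset.range (n.toNat + 1), hypPMF N K n j * l ^ j
      = Sfun N.toNat K.toNat n.toNat l / (N.toNat.choose n.toNat : ℝ) := by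
    unfold Sfun
    rw [Finset.sum_div]
    apply Finset.sum_congr rfl
    intro j hj
    rw [Finset.mem_range] at hj
    have hjn : (j:ℤ) ≤ n := by omega
    unfold hypPMF
    rw [zchoose_eq K j hK0.le (by positivity), zchoose_eq (N-K) (n-(j:ℤ)) (by omega) (by omega),
        zchoose_eq N n hN0.le hn0.le]
    have e1 : ((j:ℤ)).toNat = j := by omega
    have e2 : (N - K).toNat = N.toNat - K.toNat := by omega
    have e3 : (n - (j:ℤ)).toNat = n.toNat - j := by omega
    rw [e1, e2, e3]
    push_cast
    ring
  have hcastn : ((n.toNat : ℕ) : ℝ) = (n : ℝ) := by exact_mod_cast congrArg (Int.cast : ℤ → ℝ) (Int.toNat_of_nonneg hn0.le)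
  have hcastN : ((N.toNat : ℕ) : ℝ) = (N : ℝ) := by exact_mod_cast congrArg (Int.cast : ℤ → ℝ) (Int.toNat_of_nonneg hN0.le)
  have hSle := Sfun_le N.toNat K.toNat n.toNat hKN' hnN' l hl
  rw [hcastn, hcastN] at hSle
  have step6 : Sfun N.toNat K.toNat n.toNat l / (N.toNat.choose n.toNat : ℝ)
      ≤ (1 + ((n:ℝ)/(N:ℝ)) * (l - 1)) ^ K.toNat := by
    rw [div_le_iff₀ hCpos]
    calc Sfun N.toNat K.toNat n.toNat l
        ≤ (N.toNat.choose n.toNat : ℝ) * (1 + ((n:ℝ)/(N:ℝ)) * (l-1)) ^ K.toNat := hSle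
      _ = (1 + ((n:ℝ)/(N:ℝ)) * (l-1)) ^ K.toNat * (N.toNat.choose n.toNat : ℝ) := by ring
  calc ∑ k ∈ Finset.Icc d n, hypPMF N K n k
      ≤ ∑ k ∈ Finset.Icc 0 n, hypPMF N K n k * l ^ (k - d) := le_trans step1 step2
    _ = l ^ (-d) * (Sfun N.toNat K.toNat n.toNat l / (N.toNat.choose n.toNat : ℝ)) := by
        rw [step3, step4, step5]
    _ ≤ l ^ (-d) * (1 + ((n:ℝ)/(N:ℝ)) * (l - 1)) ^ K.toNat := by
        apply mul_le_mul_of_nonneg_left step6 (by positivity)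

theorem hypergeometric_chernoff_swapped (N K n : ℤ) (hK0 : 0 < K) (hKN : K ≤ N)
    (hn0 : 0 < n) (hnN : n < N) (d : ℤ)
    (hd : ((n : ℝ) * K / N) + 1 ≤ (d : ℝ)) (hdK : d ≤ K) :
    hypTail N K n d ≤ Real.exp (-(K : ℝ) * klBer ((d : ℝ) / K) ((n : ℝ) / N)) := by
  have hN0 : (0:ℤ) < N := hn0.trans hnN
  have hNr : (0:ℝ) < (N:ℝ) := by exact_mod_cast hN0
  have hnr : (0:ℝ) < (n:ℝ) := by exact_mod_cast hn0
  have hKr : (0:ℝ) < (K:ℝ) := by exact_mod_cast hK0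
  have hnNr : (n:ℝ) < (N:ℝ) := by exact_mod_cast hnN
  have hp0 : 0 < (n:ℝ)/(N:ℝ) := by positivity
  have hp1 : (n:ℝ)/(N:ℝ) < 1 := (div_lt_one hNr).2 hnNr
  have hdr0 : (0:ℝ) < (d:ℝ) := by
    have h1 : (0:ℝ) ≤ (n:ℝ) * K / N := by positivity
    linarith
  have hd0 : (0:ℤ) ≤ d := by exact_mod_cast hdr0.le
  have hKcast : ((K.toNat : ℕ) : ℝ) = (K:ℝ) := by
    exact_mod_cast congrArg (Int.cast : ℤ → ℝ) (Int.toNat_of_nonneg hK0.le)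
  set p : ℝ := (n:ℝ)/(N:ℝ) with hpdef
  have hq0 : 0 < 1 - p := by linarith
  have hpx : p < (d:ℝ)/(K:ℝ) := by
    rw [hpdef, div_lt_div_iff₀ hNr hKr]
    have hd2 : (n:ℝ)*K/N ≤ (d:ℝ) - 1 := by linarith
    rw [div_le_iff₀ hNr] at hd2
    nlinarith
  by_cases hdK' : d = K
  · -- boundary case d = K
    subst hdK'
    have hx1 : (d:ℝ)/(d:ℝ) = 1 := div_self hKr.ne'
    rw [hx1]
    have hkl : klBer 1 p = - Real.log p := by
      simp [klBer, one_div, Real.log_inv]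
    rw [hkl]
    have hRHS : Real.exp (-(d:ℝ) * - Real.log p) = p ^ d.toNat := by
      rw [← hKcast]
      rw [show (-((d.toNat:ℕ):ℝ) * - Real.log p) = ((d.toNat:ℕ):ℝ) * Real.log p by ring]
      rw [Real.exp_nat_mul, Real.exp_log hp0]
    rw [hRHS]
    -- limit argument
    have hbd : ∀ l : ℝ, 1 ≤ l → hypTail N d n d ≤ ((1-p)/l + p) ^ d.toNat := by
      intro l hl
      have hl0 : (0:ℝ) < l := lt_of_lt_of_le one_pos hl
      have h := chernoff_bound N d n d hK0 hKN hn0 hnN hd0 hl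
      have heq : l ^ (-d) * (1 + p * (l - 1)) ^ d.toNat = ((1-p)/l + p) ^ d.toNat := by
        have e2 : (1-p)/l + p = ((1-p) + p*l)/l := by field_simp
        have e1 : (1:ℝ) + p*(l-1) = ((1-p) + p*l) := by ring
        rw [e1, e2, div_pow, zpow_neg, ← zpow_natCast l d.toNat,
            Int.toNat_of_nonneg hd0]
        rw [eq_div_iff (by positivity)]
        field_simp
      exact le_of_le_of_eq h heq
    have hten : Filter.Tendsto (fun l : ℝ => ((1-p)/l + p) ^ d.toNat)
        Filter.atTop (nhds (p ^ d.toNat)) := by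
      have h1 : Filter.Tendsto (fun l : ℝ => (1-p)/l) Filter.atTop (nhds 0) :=
        tendsto_const_nhds.div_atTop Filter.tendsto_id
      have h2 : Filter.Tendsto (fun l : ℝ => (1-p)/l + p) Filter.atTop (nhds (0 + p)) :=
        h1.add tendsto_const_nhds
      rw [zero_add] at h2
      exact h2.pow d.toNat
    exact ge_of_tendsto hten (Filter.eventually_atTop.2 ⟨1, hbd⟩)
  · -- interior case d < K
    have hdKlt : d < K := lt_of_le_of_ne hdK hdK'
    have hdKr : (d:ℝ) < (K:ℝ) := by exact_mod_cast hdKlt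
    set x : ℝ := (d:ℝ)/(K:ℝ) with hxdef
    have hx0 : 0 < x := by rw [hxdef]; positivity
    have hx1 : x < 1 := by rw [hxdef, div_lt_one hKr]; exact hdKr
    have hy0 : 0 < 1 - x := by linarith
    have hdx : (d:ℝ) = (K:ℝ) * x := by rw [hxdef]; field_simp
    set l : ℝ := x * (1-p) / ((1-x) * p) with hldef
    have hl0 : 0 < l := by rw [hldef]; positivity
    have hl1 : 1 ≤ l := by
      rw [hldef, one_le_div (by positivity)]
      nlinarith [hpx]
    have h := chernoff_bound N K n d hK0 hKN hn0 hnN hd0 hl1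
    have hqy : 1 + p * (l - 1) = (1-p)/(1-x) := by
      rw [hldef]
      field_simp
      ring
    have hbase : (0:ℝ) < (1-p)/(1-x) := by positivity
    have heq : l ^ (-d) * (1 + p * (l - 1)) ^ K.toNat
        = Real.exp (-(K:ℝ) * klBer x p) := by
      rw [hqy]
      have e1 : l ^ (-d) = Real.exp (-(d:ℝ) * Real.log l) := by
        rw [← Real.rpow_intCast l (-d), Real.rpow_def_of_pos hl0]
        push_cast
        ring_nf
      have e2 : ((1-p)/(1-x)) ^ K.toNat
          = Real.exp ((K:ℝ) * Real.log ((1-p)/(1-x))) := by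
        calc ((1-p)/(1-x)) ^ K.toNat
            = (Real.exp (Real.log ((1-p)/(1-x)))) ^ K.toNat := by rw [Real.exp_log hbase]
          _ = Real.exp (((K.toNat:ℕ):ℝ) * Real.log ((1-p)/(1-x))) := (Real.exp_nat_mul _ _).symm
          _ = Real.exp ((K:ℝ) * Real.log ((1-p)/(1-x))) := by rw [hKcast]
      rw [e1, e2, ← Real.exp_add]
      congr 1
      unfold klBer
      rw [hldef]
      rw [Real.log_div (by positivity) (by positivity),
          Real.log_mul hx0.ne' hq0.ne', Real.log_mul hy0.ne' hp0.ne',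
          Real.log_div hq0.ne' hy0.ne',
          Real.log_div hx0.ne' hp0.ne',
          Real.log_div hy0.ne' hq0.ne']
      rw [hdx]
      ring
    exact le_of_le_of_eq h heq
end

section
/- Let X ~ Hypergeometric(N,K,n). Then X has the same distribution as a sum of n independent Bernoulli random variables Y_1,…,Y_n with parameters p_1,…,p_n ∈ [0,1] satisfying Σ_i p_i = nK/N. -/
open Finset

open Polynomial

lemma vand (a b n : ℕ) :
    ∑ k ∈ range (n+1), a.choose k * b.choose (n-k) = (a+b).choose n := by
  rw [Nat.add_choose_eq, Finset.Nat.sum_antidiagonal_eq_sum_range_succ_mk]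

lemma mean_id (K M n : ℕ) :
    (K+M) * ∑ k ∈ range (n+1), k * (K.choose k * M.choose (n-k))
      = n * K * (K+M).choose n := by
  cases n with
  | zero => simp
  | succ m =>
    have h1 : ∀ k, (k+1) * K.choose (k+1) = K * (K-1).choose k := by
      intro k
      cases K with
      | zero => simp
      | succ K' =>
        simp only [Nat.succ_sub_one]
        calc (k+1) * (K'+1).choose (k+1) = (K'+1).choose (k+1) * (k+1) := mul_comm _ _
          _ = (K'+1) * K'.choose k := (Nat.add_one_mul_choose_eq K' k).symm
    have h2 : ∑ k ∈ range (m+2), k * (K.choose k * M.choose (m+1-k))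
        = K * (K-1+M).choose m := by
      rw [Finset.sum_range_succ']
      simp only [Nat.zero_eq, Nat.choose_zero_right, zero_mul, add_zero]
      rw [← vand (K-1) M m, Finset.mul_sum]
      refine Finset.sum_congr rfl fun k hk => ?_
      have : m + 1 - (k+1) = m - k := by omega
      rw [this, ← mul_assoc, h1 k, mul_assoc]
    rw [h2]
    cases K with
    | zero => simp
    | succ K' =>
      have h3 := Nat.add_one_mul_choose_eq (K'+M) m
      have h4 : K' + 1 - 1 + M = K' + M := by omega
      rw [h4]
      have h5 : K' + 1 + M = (K'+M) + 1 := by omega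
      rw [h5]
      calc (K'+M+1) * ((K'+1) * (K'+M).choose m)
          = (K'+1) * ((K'+M+1) * (K'+M).choose m) := by ring
        _ = (K'+1) * ((K'+M+1).choose (m+1) * (m+1)) := by rw [← h3]
        _ = (m+1) * (K'+1) * (K'+M+1).choose (m+1) := by ring

lemma star (K M n : ℕ) :
    (X:ℝ[X])^(M-n) * (X + C 1)^(K-n) *
      ∑ k ∈ range (n+1), ((Nat.factorial n * (K.choose k * M.choose (n-k)) : ℕ) : ℝ[X])
        * (X^k * (X + C 1)^(n-k))
    = X^(n-M) * (X + C 1)^(n-K) * derivative^[n] ((X:ℝ[X])^M * (X + C 1)^K) := by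
  rw [iterate_derivative_mul, Finset.mul_sum, Finset.mul_sum]
  refine Finset.sum_congr rfl fun k hk => ?_
  rw [Finset.mem_range, Nat.lt_succ_iff] at hk
  rw [iterate_derivative_X_pow_eq_smul, iterate_derivative_X_add_pow]
  by_cases hK : k ≤ K
  · by_cases hM : n - k ≤ M
    · have hcoef : n.factorial * (K.choose k * M.choose (n - k))
          = n.choose k * (M.descFactorial (n-k) * K.descFactorial k) := by
        rw [Nat.descFactorial_eq_factorial_mul_choose, Nat.descFactorial_eq_factorial_mul_choose,
          ← Nat.choose_mul_factorial_mul_factorial hk]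
        ring
      trans (((n.choose k * (M.descFactorial (n-k) * K.descFactorial k) : ℕ) : ℝ[X])
          * ((X:ℝ[X])^(n-M+(M-(n-k))) * (X + C 1)^(n-K+(K-k))))
      · rw [← hcoef, show n-M+(M-(n-k)) = M-n+k by omega,
          show n-K+(K-k) = K-n+(n-k) by omega, pow_add, pow_add]
        ring
      · simp only [nsmul_eq_mul, smul_eq_C_mul, map_natCast]
        push_cast
        rw [pow_add, pow_add]
        ring
    · have h1 : M.choose (n-k) = 0 := Nat.choose_eq_zero_of_lt (by omega)
      have h2 : M.descFactorial (n-k) = 0 := Nat.descFactorial_eq_zero_iff_lt.2 (by omega)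
      simp [h1, h2]
  · have h1 : K.choose k = 0 := Nat.choose_eq_zero_of_lt (by omega)
    have h2 : K.descFactorial k = 0 := Nat.descFactorial_eq_zero_iff_lt.2 (by omega)
    simp [h1, h2]

lemma iter_deriv_facts (p : ℝ[X]) (hp : p ≠ 0) (h : Multiset.card p.roots = p.natDegree) :
    ∀ n, n ≤ p.natDegree → derivative^[n] p ≠ 0 ∧
      (derivative^[n] p).natDegree = p.natDegree - n ∧
      Multiset.card (derivative^[n] p).roots = p.natDegree - n := by
  intro n
  induction n with
  | zero => intro _; exact ⟨hp, by simp, by simp [h]⟩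
  | succ m ih =>
    intro hm
    obtain ⟨h0, h1, h2⟩ := ih (by omega)
    set q := derivative^[m] p with hq
    have hd : q.natDegree ≠ 0 := by omega
    have hlc : q.coeff q.natDegree ≠ 0 := by
      rw [← leadingCoeff]; exact leadingCoeff_ne_zero.2 h0
    have hco : (derivative q).coeff (q.natDegree - 1) ≠ 0 := by
      rw [coeff_derivative, show q.natDegree - 1 + 1 = q.natDegree by omega]
      intro hz
      rcases mul_eq_zero.1 hz with h' | h'
      · exact hlc h'
      · have : ((q.natDegree - 1 : ℕ) : ℝ) + 1 = 0 := h'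
        have : (q.natDegree - 1 : ℕ) + 1 = 0 := by exact_mod_cast this
        omega
    have hne : derivative q ≠ 0 := fun hz => hco (by simp [hz])
    have hdeg_lt : (derivative q).natDegree < q.natDegree := natDegree_derivative_lt hd
    have hdeg_ge : q.natDegree - 1 ≤ (derivative q).natDegree := le_natDegree_of_ne_zero hco
    have hiter : derivative^[m+1] p = derivative q := by
      rw [Function.iterate_succ_apply']
    have hr1 : Multiset.card (derivative q).roots ≤ (derivative q).natDegree := card_roots' _
    have hr2 := card_roots_le_derivative q
    refine ⟨hiter ▸ hne, ?_, ?_⟩ <;> rw [hiter] <;> omega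

lemma G_facts (K M n : ℕ) (h : n ≤ K + M) :
    derivative^[n] ((X:ℝ[X])^M * (X + C 1)^K) ≠ 0 ∧
    (derivative^[n] ((X:ℝ[X])^M * (X + C 1)^K)).natDegree = K + M - n ∧
    Multiset.card (derivative^[n] ((X:ℝ[X])^M * (X + C 1)^K)).roots = K + M - n := by
  have hmono : ((X:ℝ[X])^M * (X + C 1)^K).Monic :=
    (monic_X_pow M).mul ((monic_X_add_C (1:ℝ)).pow K)
  have hF : ((X:ℝ[X])^M * (X + C 1)^K) ≠ 0 := hmono.ne_zero
  have hdeg : ((X:ℝ[X])^M * (X + C 1)^K).natDegree = K + M := by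
    rw [(monic_X_pow M).natDegree_mul ((monic_X_add_C (1:ℝ)).pow K),
      natDegree_X_pow, natDegree_pow, natDegree_X_add_C]
    ring
  have hroots : Multiset.card ((X:ℝ[X])^M * (X + C 1)^K).roots = K + M := by
    have hx : (X + C 1 : ℝ[X]).roots = {-1} := by
      rw [show (X + C 1 : ℝ[X]) = X - C (-1) by simp [sub_eq_add_neg], roots_X_sub_C]
    rw [roots_mul hF, roots_pow, roots_pow, roots_X, hx]
    simp [add_comm]
  have := iter_deriv_facts _ hF (hdeg ▸ hroots) n (by omega)
  rw [hdeg] at this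
  exact this

noncomputable def Psi (K M n : ℕ) : ℝ[X] :=
  ∑ k ∈ range (n+1), ((K.choose k * M.choose (n-k) : ℕ) : ℝ[X]) * (X^k * (X + C 1)^(n-k))

lemma term_monic (k m : ℕ) : ((X:ℝ[X])^k * (X + C 1)^m).Monic :=
  (monic_X_pow k).mul ((monic_X_add_C (1:ℝ)).pow m)

lemma term_natDegree (k m : ℕ) : ((X:ℝ[X])^k * (X + C 1)^m).natDegree = k + m := by
  rw [(monic_X_pow k).natDegree_mul ((monic_X_add_C (1:ℝ)).pow m),
    natDegree_X_pow, natDegree_pow, natDegree_X_add_C, mul_one]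

lemma Psi_coeff_n (K M n : ℕ) : (Psi K M n).coeff n = ((K+M).choose n : ℝ) := by
  rw [Psi, finset_sum_coeff]
  have : ∀ k ∈ range (n+1),
      (((K.choose k * M.choose (n-k) : ℕ) : ℝ[X]) * (X^k * (X + C 1)^(n-k))).coeff n
      = ((K.choose k * M.choose (n-k) : ℕ) : ℝ) := by
    intro k hk
    rw [mem_range, Nat.lt_succ_iff] at hk
    rw [← C_eq_natCast, coeff_C_mul]
    have hd : ((X:ℝ[X])^k * (X + C 1)^(n-k)).natDegree = n := by
      rw [term_natDegree]; omega
    have hc1 := (term_monic k (n-k)).coeff_natDegree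
    rw [hd] at hc1
    rw [hc1, mul_one]
  rw [Finset.sum_congr rfl this, ← Nat.cast_sum, vand]

lemma Psi_natDegree_le (K M n : ℕ) : (Psi K M n).natDegree ≤ n := by
  refine natDegree_sum_le_of_forall_le _ _ fun k hk => ?_
  rw [mem_range, Nat.lt_succ_iff] at hk
  refine (natDegree_mul_le).trans ?_
  rw [natDegree_natCast, term_natDegree]
  omega

lemma Psi_ne_zero (K M n : ℕ) (h : n ≤ K + M) : Psi K M n ≠ 0 := by
  have h1 : (Psi K M n).coeff n ≠ 0 := by
    rw [Psi_coeff_n]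
    exact_mod_cast (Nat.choose_pos h).ne'
  exact fun hz => h1 (by simp [hz])

lemma Psi_natDegree (K M n : ℕ) (h : n ≤ K + M) : (Psi K M n).natDegree = n := by
  refine le_antisymm (Psi_natDegree_le K M n) (le_natDegree_of_ne_zero ?_)
  rw [Psi_coeff_n]
  exact_mod_cast (Nat.choose_pos h).ne'

lemma roots_card_XP (a b : ℕ) :
    Multiset.card ((X:ℝ[X])^a * (X + C 1)^b).roots = a + b := by
  have := (G_facts b a 0 (by omega)).2.2
  simpa [add_comm] using this

lemma Psi_roots_card (K M n : ℕ) (h : n ≤ K + M) :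
    Multiset.card (Psi K M n).roots = n := by
  have hstar := star K M n
  have hPsiSum : ∑ k ∈ range (n+1),
      ((Nat.factorial n * (K.choose k * M.choose (n-k)) : ℕ) : ℝ[X]) * (X^k * (X + C 1)^(n-k))
      = C (Nat.factorial n : ℝ) * Psi K M n := by
    rw [Psi, Finset.mul_sum]
    refine Finset.sum_congr rfl fun k _ => ?_
    push_cast
    rw [← C_eq_natCast]
    push_cast
    ring
  rw [hPsiSum] at hstar
  have hG := G_facts K M n h
  have hA : ((X:ℝ[X])^(M-n) * (X + C 1)^(K-n)) ≠ 0 := (term_monic _ _).ne_zero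
  have hB : ((X:ℝ[X])^(n-M) * (X + C 1)^(n-K)) ≠ 0 := (term_monic _ _).ne_zero
  have hfac : (Nat.factorial n : ℝ) ≠ 0 := by exact_mod_cast n.factorial_ne_zero
  have hPsi := Psi_ne_zero K M n h
  have hCP : C (Nat.factorial n : ℝ) * Psi K M n ≠ 0 :=
    mul_ne_zero (by simpa using hfac) hPsi
  have hL := congrArg (fun p : ℝ[X] => Multiset.card p.roots) hstar
  simp only [roots_mul (mul_ne_zero hA hCP), roots_mul (mul_ne_zero hB hG.1),
    roots_C_mul _ hfac, Multiset.card_add] at hL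
  rw [roots_card_XP, roots_card_XP, hG.2.2] at hL
  omega

lemma Psi_eval (K M n : ℕ) (r : ℝ) :
    Polynomial.eval r (Psi K M n)
      = ∑ k ∈ range (n+1), ((K.choose k * M.choose (n-k) : ℕ) : ℝ) * (r^k * (r+1)^(n-k)) := by
  rw [Psi, eval_finset_sum]
  refine Finset.sum_congr rfl fun k _ => ?_
  simp

lemma Psi_root_mem (K M n : ℕ) (h : n ≤ K + M) {r : ℝ} (hr : r ∈ (Psi K M n).roots) :
    -1 ≤ r ∧ r ≤ 0 := by
  have hPsi := Psi_ne_zero K M n h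
  have hev0 : Polynomial.eval r (Psi K M n) = 0 := (mem_roots hPsi).1 hr
  rw [Psi_eval] at hev0
  set k0 := min n K with hk0def
  have hk0mem : k0 ∈ range (n+1) := by rw [mem_range]; omega
  have hc0 : (0:ℝ) < ((K.choose k0 * M.choose (n-k0) : ℕ) : ℝ) := by
    have h1 : 0 < K.choose k0 := Nat.choose_pos (by omega)
    have h2 : 0 < M.choose (n-k0) := Nat.choose_pos (by omega)
    positivity
  constructor
  · by_contra hlt
    push_neg at hlt
    have hkey : ∀ k ∈ range (n+1),
        ((K.choose k * M.choose (n-k) : ℕ) : ℝ) * ((-r)^k * (-(r+1))^(n-k))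
        = (-1)^n * (((K.choose k * M.choose (n-k) : ℕ) : ℝ) * (r^k * (r+1)^(n-k))) := by
      intro k hk
      rw [mem_range, Nat.lt_succ_iff] at hk
      rw [neg_pow, show -(r+1) = (-1)*(r+1) by ring, mul_pow]
      rw [show ((-1:ℝ))^k * r^k * ((-1)^(n-k) * (r+1)^(n-k))
          = ((-1)^k * (-1)^(n-k)) * (r^k * (r+1)^(n-k)) by ring,
        ← pow_add, show k + (n-k) = n by omega]
      ring
    have hzero : ∑ k ∈ range (n+1),
        ((K.choose k * M.choose (n-k) : ℕ) : ℝ) * ((-r)^k * (-(r+1))^(n-k)) = 0 := by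
      rw [Finset.sum_congr rfl hkey, ← Finset.mul_sum, hev0, mul_zero]
    have hpos : 0 < ∑ k ∈ range (n+1),
        ((K.choose k * M.choose (n-k) : ℕ) : ℝ) * ((-r)^k * (-(r+1))^(n-k)) := by
      refine Finset.sum_pos' (fun k _ => ?_) ⟨k0, hk0mem, ?_⟩
      · have h1 : (0:ℝ) ≤ -r := by linarith
        have h2 : (0:ℝ) ≤ -(r+1) := by linarith
        positivity
      · have h1 : (0:ℝ) < -r := by linarith
        have h2 : (0:ℝ) < -(r+1) := by linarith
        positivity
    linarith
  · by_contra hlt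
    push_neg at hlt
    have hpos : 0 < ∑ k ∈ range (n+1),
        ((K.choose k * M.choose (n-k) : ℕ) : ℝ) * (r^k * (r+1)^(n-k)) := by
      refine Finset.sum_pos' (fun k _ => ?_) ⟨k0, hk0mem, ?_⟩
      · have h2 : (0:ℝ) < r + 1 := by linarith
        positivity
      · have h2 : (0:ℝ) < r + 1 := by linarith
        positivity
    linarith

lemma prod_coeff (n : ℕ) (p : Fin n → ℝ) (k : ℕ) :
    (∏ i : Fin n, (C (1 - p i) + C (p i) * X)).coeff k
      = ∑ S : Finset (Fin n), if S.card = k then (∏ i ∈ S, p i) * (∏ i ∈ Sᶜ, (1 - p i)) else 0 := by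
  classical
  have hexp : ∏ i : Fin n, (C (1 - p i) + C (p i) * X)
      = ∑ S : Finset (Fin n), C ((∏ i ∈ S, p i) * (∏ i ∈ Sᶜ, (1 - p i))) * X^S.card := by
    have h0 : (∏ i : Fin n, (C (1 - p i) + C (p i) * X))
        = ∏ i : Fin n, (C (p i) * X + C (1 - p i)) :=
      Finset.prod_congr rfl fun i _ => add_comm _ _
    rw [h0, Finset.prod_add, Finset.powerset_univ]
    refine Finset.sum_congr rfl fun S _ => ?_
    rw [Finset.prod_mul_distrib, Finset.prod_const, ← Finset.compl_eq_univ_sdiff,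
      ← map_prod, ← map_prod, map_mul]
    ring
  rw [hexp, finset_sum_coeff]
  refine Finset.sum_congr rfl fun S _ => ?_
  rw [coeff_C_mul, coeff_X_pow]
  by_cases hS : S.card = k
  · simp [hS]
  · simp [hS, Ne.symm hS]

lemma list_prod_map_fin (l : List ℝ) (f : ℝ → ℝ[X]) :
    (l.map f).prod = ∏ i : Fin l.length, f (l.get i) := by
  induction l with
  | nil => simp
  | cons a l ih =>
    rw [List.map_cons, List.prod_cons, ih]
    simp only [List.length_cons]
    rw [Fin.prod_univ_succ]
    simp

lemma eval_one_derivative_prod {ι : Type*} (s : Finset ι) (f : ι → ℝ[X])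
    (hf : ∀ i ∈ s, Polynomial.eval 1 (f i) = 1) :
    Polynomial.eval 1 (derivative (∏ i ∈ s, f i))
      = ∑ i ∈ s, Polynomial.eval 1 (derivative (f i)) := by
  classical
  induction s using Finset.induction with
  | empty => simp
  | @insert a s ha ih =>
    rw [Finset.prod_insert ha, derivative_mul, Finset.sum_insert ha, eval_add, eval_mul, eval_mul,
      eval_prod, Finset.prod_eq_one (fun i hi => hf i (Finset.mem_insert_of_mem hi)),
      hf a (Finset.mem_insert_self a s), ih (fun i hi => hf i (Finset.mem_insert_of_mem hi))]
    ring

lemma main (K M n : ℕ) (h : n ≤ K + M) :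
    ∃ p : Fin n → ℝ, (∀ i, p i ∈ Set.Icc (0:ℝ) 1) ∧
      ((K + M : ℕ) : ℝ) * ∑ i, p i = (n : ℝ) * (K : ℝ) ∧
      ∀ k : ℕ, (((K+M).choose n : ℕ) : ℝ) *
          (∑ S : Finset (Fin n), if S.card = k then
            (∏ i ∈ S, p i) * (∏ i ∈ Sᶜ, (1 - p i)) else 0)
        = if k ≤ n then ((K.choose k * M.choose (n-k) : ℕ) : ℝ) else 0 := by
  classical
  have hPsi := Psi_ne_zero K M n h
  have hcard := Psi_roots_card K M n h
  have hL : (Psi K M n).roots.toList.length = n := by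
    rw [Multiset.length_toList, hcard]
  set L := (Psi K M n).roots.toList with hLdef
  set q : Fin n → ℝ := fun i => L.get (Fin.cast hL.symm i) with hqdef
  set p : Fin n → ℝ := fun i => 1 + q i with hpdef
  have hmemL : ∀ i : Fin n, q i ∈ (Psi K M n).roots := fun i =>
    Multiset.mem_toList.1 (L.get_mem _)
  have hlead : (Psi K M n).leadingCoeff = (((K+M).choose n : ℕ) : ℝ) := by
    rw [Polynomial.leadingCoeff, Psi_natDegree K M n h, Psi_coeff_n]
  have hfact : Psi K M n
      = C (((K+M).choose n : ℕ) : ℝ) * ∏ i : Fin n, (X - C (q i)) := by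
    have h0 := C_leadingCoeff_mul_prod_multiset_X_sub_C
      (p := Psi K M n) (by rw [hcard, Psi_natDegree K M n h])
    rw [hlead] at h0
    rw [← h0]
    congr 1
    calc ((Psi K M n).roots.map fun a => (X:ℝ[X]) - C a).prod
        = ((L.map fun a => (X:ℝ[X]) - C a) : Multiset ℝ[X]).prod := by
          rw [← Multiset.map_coe, hLdef, Multiset.coe_toList]
      _ = (L.map fun a => (X:ℝ[X]) - C a).prod := by
          rw [Multiset.prod_coe]
      _ = ∏ i : Fin L.length, ((X:ℝ[X]) - C (L.get i)) := list_prod_map_fin _ _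
      _ = ∏ i : Fin n, ((X:ℝ[X]) - C (q i)) := by
          refine Fintype.prod_equiv (finCongr hL) _ _ fun i => ?_
          simp [hqdef, finCongr]
  have hCnnR : (((K+M).choose n : ℕ) : ℝ) ≠ 0 := by
    exact_mod_cast (Nat.choose_pos h).ne'
  have hT : (∑ k ∈ range (n+1), C ((K.choose k * M.choose (n-k) : ℕ) : ℝ) * (X:ℝ[X])^k)
      = C (((K+M).choose n : ℕ) : ℝ)
        * ∏ i : Fin n, (C (1 - p i) + C (p i) * X) := by
    have hinf : {t : ℝ | t ≠ 1}.Infinite := by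
      have h1 : ({1}ᶜ : Set ℝ).Infinite := (Set.finite_singleton 1).infinite_compl
      have h2 : {t : ℝ | t ≠ 1} = ({1} : Set ℝ)ᶜ := by ext t; simp
      rw [h2]; exact h1
    refine sub_eq_zero.mp (Polynomial.eq_zero_of_infinite_isRoot _ (hinf.mono ?_))
    intro t ht
    simp only [Set.mem_setOf_eq, IsRoot, eval_sub, sub_eq_zero] at *
    have h1t : (1:ℝ) - t ≠ 0 := sub_ne_zero.2 (Ne.symm ht)
    set x : ℝ := t / (1 - t) with hxdef
    have hx : x * (1 - t) = t := div_mul_cancel₀ t h1t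
    have hx1 : (x + 1) * (1 - t) = 1 := by
      rw [hxdef]; field_simp; ring
    have hPsiEval := congrArg (Polynomial.eval x) hfact
    rw [Psi_eval] at hPsiEval
    simp only [eval_mul, eval_C, eval_prod, eval_sub, eval_X] at hPsiEval
    have hLHS : Polynomial.eval t
        (∑ k ∈ range (n+1), C ((K.choose k * M.choose (n-k) : ℕ) : ℝ) * (X:ℝ[X])^k)
        = ∑ k ∈ range (n+1), ((K.choose k * M.choose (n-k) : ℕ) : ℝ) * t^k := by
      rw [eval_finset_sum]; simp
    have hRHS : Polynomial.eval t (C (((K+M).choose n : ℕ) : ℝ)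
          * ∏ i : Fin n, (C (1 - p i) + C (p i) * X))
        = (((K+M).choose n : ℕ) : ℝ) * ∏ i : Fin n, ((1 - p i) + (p i) * t) := by
      simp [eval_prod]
    rw [hLHS, hRHS]
    calc ∑ k ∈ range (n+1), ((K.choose k * M.choose (n-k) : ℕ) : ℝ) * t^k
        = (∑ k ∈ range (n+1),
            ((K.choose k * M.choose (n-k) : ℕ) : ℝ) * (x^k * (x+1)^(n-k))) * (1-t)^n := by
          rw [Finset.sum_mul]
          refine Finset.sum_congr rfl fun k hk => ?_
          rw [mem_range, Nat.lt_succ_iff] at hk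
          have e : (1-t)^n = (1-t)^k * (1-t)^(n-k) := by
            rw [← pow_add]; congr 1; omega
          rw [mul_assoc, e,
            show x^k*(x+1)^(n-k)*((1-t)^k*(1-t)^(n-k))
              = (x*(1-t))^k * ((x+1)*(1-t))^(n-k) by
                rw [mul_pow, mul_pow]; ring,
            hx, hx1, one_pow, mul_one]
      _ = (((K+M).choose n : ℕ) : ℝ) * (∏ i : Fin n, (x - q i)) * (1-t)^n := by
          rw [hPsiEval]
      _ = (((K+M).choose n : ℕ) : ℝ) * ∏ i : Fin n, ((x - q i)*(1-t)) := by
          rw [Finset.prod_mul_distrib, Finset.prod_const, Finset.card_univ,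
            Fintype.card_fin, mul_assoc]
      _ = (((K+M).choose n : ℕ) : ℝ) * ∏ i : Fin n, ((1 - p i) + (p i) * t) := by
          congr 1
          refine Finset.prod_congr rfl fun i _ => ?_
          have hpq : p i = 1 + q i := rfl
          calc (x - q i)*(1-t) = x*(1-t) - q i*(1-t) := by ring
            _ = t - q i*(1-t) := by rw [hx]
            _ = (1 - p i) + (p i)*t := by rw [hpq]; ring
  refine ⟨p, ?_, ?_, ?_⟩
  · intro i
    obtain ⟨h1, h2⟩ := Psi_root_mem K M n h (hmemL i)
    have hpq : p i = 1 + q i := rfl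
    exact ⟨by rw [hpq]; linarith, by rw [hpq]; linarith⟩
  · -- mean
    have hder := congrArg (fun r : ℝ[X] => Polynomial.eval 1 (derivative r)) hT
    simp only [derivative_sum, derivative_C_mul, derivative_X_pow,
      eval_finset_sum, eval_mul, eval_C, eval_pow, eval_X, one_pow, mul_one] at hder
    rw [eval_one_derivative_prod _ _ (fun i _ => by simp)] at hder
    have hder1 : ∀ i : Fin n,
        Polynomial.eval 1 (derivative (C (1 - p i) + C (p i) * X)) = p i := by
      intro i
      simp [derivative_add, derivative_C, derivative_C_mul, derivative_X]
    rw [Finset.sum_congr rfl (fun i _ => hder1 i)] at hder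
    have hmean := mean_id K M n
    have hmeanR : ((K+M : ℕ) : ℝ) * ∑ k ∈ range (n+1),
        (k : ℝ) * ((K.choose k * M.choose (n-k) : ℕ) : ℝ) = (n : ℝ) * (K : ℝ) *
        (((K+M).choose n : ℕ) : ℝ) := by
      exact_mod_cast congrArg (fun z : ℕ => (z : ℝ)) hmean
    have hder2 : ∑ k ∈ range (n+1), (k:ℝ) * ((K.choose k * M.choose (n-k) : ℕ) : ℝ)
        = (((K+M).choose n : ℕ) : ℝ) * ∑ i, p i := by
      rw [← hder]
      exact Finset.sum_congr rfl fun k _ => mul_comm _ _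
    rw [hder2] at hmeanR
    refine mul_left_cancel₀ hCnnR ?_
    linear_combination hmeanR
  · -- pmf coefficients
    intro k
    have hck := congrArg (fun r : ℝ[X] => r.coeff k) hT
    simp only [finset_sum_coeff, coeff_C_mul, coeff_X_pow, mul_ite, mul_one, mul_zero] at hck
    rw [Finset.sum_ite_eq (range (n+1)) k
      (fun j => ((K.choose j * M.choose (n-j) : ℕ) : ℝ))] at hck
    rw [prod_coeff] at hck
    rw [← hck]
    simp [Nat.lt_succ_iff]

lemma zchoose_natCast (a b : ℕ) : zchoose (a : ℤ) (b : ℤ) = (a.choose b : ℤ) := by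
  unfold zchoose
  split_ifs with hab
  · simp
  · have hlt : a < b := by omega
    rw [Nat.choose_eq_zero_of_lt hlt]
    simp

/-- Poisson-binomial representation of the hypergeometric distribution. -/
theorem hypergeometric_poisson_binomial (N K : ℤ) (n : ℕ) (hN : 1 ≤ N)
    (hK0 : 0 ≤ K) (hKN : K ≤ N) (hnN : (n : ℤ) ≤ N) :
    ∃ p : Fin n → ℝ, (∀ i, p i ∈ Set.Icc (0 : ℝ) 1) ∧
      (∑ i, p i) = (n : ℝ) * (K : ℝ) / (N : ℝ) ∧
      ∀ k : ℕ, hypPMF N K n k =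
        ∑ S : Finset (Fin n), if S.card = k then
          (∏ i ∈ S, p i) * (∏ i ∈ Sᶜ, (1 - p i)) else 0 := by
  obtain ⟨Kn, rfl⟩ : ∃ Kn : ℕ, K = (Kn : ℤ) := ⟨K.toNat, (Int.toNat_of_nonneg hK0).symm⟩
  obtain ⟨M, rfl⟩ : ∃ M : ℕ, N = ((Kn + M : ℕ) : ℤ) := ⟨(N - Kn).toNat, by omega⟩
  have h : n ≤ Kn + M := by exact_mod_cast hnN
  have hCnn : (((Kn+M).choose n : ℕ) : ℝ) ≠ 0 := by
    exact_mod_cast (Nat.choose_pos h).ne'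
  obtain ⟨p, hmem, hsum, hpmf⟩ := main Kn M n h
  refine ⟨p, hmem, ?_, ?_⟩
  · have hNne : ((Kn + M : ℕ) : ℝ) ≠ 0 := by
      have h1 : (1:ℕ) ≤ Kn + M := by exact_mod_cast hN
      exact_mod_cast (by omega : Kn + M ≠ 0)
    rw [eq_div_iff (by push_cast; exact_mod_cast hNne)]
    push_cast at hsum ⊢
    linarith
  · intro k
    have hp := hpmf k
    unfold hypPMF
    have e2 : ((Kn + M : ℕ) : ℤ) - Kn = (M : ℤ) := by push_cast; ring
    by_cases hk : k ≤ n
    · have e3 : (n:ℤ) - k = ((n - k : ℕ) : ℤ) := by omega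
      rw [e2, e3, zchoose_natCast, zchoose_natCast, zchoose_natCast]
      rw [if_pos hk] at hp
      rw [div_eq_iff (by exact_mod_cast hCnn)]
      push_cast
      push_cast at hp
      linarith
    · have e0 : zchoose (((Kn+M:ℕ):ℤ) - Kn) ((n:ℤ) - (k:ℤ)) = 0 := by
        unfold zchoose
        rw [if_neg (by omega)]
      rw [e0]
      rw [if_neg hk] at hp
      have hz : (∑ S : Finset (Fin n), if S.card = k then
          (∏ i ∈ S, p i) * (∏ i ∈ Sᶜ, (1 - p i)) else 0) = 0 := by
        rcases mul_eq_zero.1 hp with hc | hs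
        · exact absurd hc hCnn
        · exact hs
      rw [hz]
      simp
end

section
/- For integers n, K, N with 0 < K < n ≤ N and real d with nK/N < d ≤ K, we have K·D(d/K ∥ n/N) ≥ n·D(d/n ∥ K/N), where D is the binary KL divergence; i.e., the swapped Chernoff bound is at least as tight when n > K. -/
open Finset

private lemma log_lb {u : ℝ} (hu : 0 < u) : 1 - 1 / u ≤ Real.log u := by
  have h := Real.log_le_sub_one_of_pos (inv_pos.mpr hu)
  rw [Real.log_inv] at h
  rw [one_div]
  linarith

private lemma key_ineq (b q c : ℝ) (hb : 0 ≤ b) (hq : 0 < q) (hc : 0 ≤ c) :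
    (b + c) * Real.log ((b + c) / (q + c)) ≤ b * Real.log (b / q) := by
  rcases hb.eq_or_lt with hb0 | hb0
  · rw [← hb0]
    simp only [zero_add, zero_mul]
    have hlog : Real.log (c / (q + c)) ≤ 0 :=
      Real.log_nonpos (by positivity) (by
        rw [div_le_one (by linarith)]; linarith)
    nlinarith [mul_nonneg hc (neg_nonneg.mpr hlog)]
  · have hs : 0 < b + c := by linarith
    have ht : 0 < q + c := by linarith
    have e1 : 1 - q * (b + c) / (b * (q + c)) ≤ Real.log (b * (q + c) / (q * (b + c))) := by
      have := log_lb (u := b * (q + c) / (q * (b + c))) (by positivity)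
      rwa [one_div_div] at this
    have e2 : 1 - (b + c) / (q + c) ≤ Real.log ((q + c) / (b + c)) := by
      have := log_lb (u := (q + c) / (b + c)) (by positivity)
      rwa [one_div_div] at this
    have hsplit : b * Real.log (b / q) - (b + c) * Real.log ((b + c) / (q + c)) =
        b * Real.log (b * (q + c) / (q * (b + c))) + c * Real.log ((q + c) / (b + c)) := by
      rw [Real.log_div (by positivity) (by positivity),
        Real.log_div (by positivity) (by positivity),
        Real.log_div (by positivity) (by positivity),
        Real.log_div (by positivity) (by positivity),
        Real.log_mul (by positivity) (by positivity),
        Real.log_mul (by positivity) (by positivity)]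
      ring
    have d1 : b * (1 - q * (b + c) / (b * (q + c))) = b - q * (b + c) / (q + c) := by
      field_simp
      try ring
    have d2 : c * (1 - (b + c) / (q + c)) = c - c * (b + c) / (q + c) := by
      ring
    have d3 : b - q * (b + c) / (q + c) + (c - c * (b + c) / (q + c)) = 0 := by
      field_simp
      try ring
    have m1 := mul_le_mul_of_nonneg_left e1 hb0.le
    have m2 := mul_le_mul_of_nonneg_left e2 hc
    linarith [hsplit, m1, m2, d1, d2, d3]

theorem swapped_chernoff_exponent_tighter (N K n : ℕ) (hK0 : 0 < K) (hKn : K < n)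
    (hnN : n ≤ N) (d : ℝ) (hd1 : (n : ℝ) * K / N < d) (hd2 : d ≤ (K : ℝ)) :
    (n : ℝ) * klBer (d / n) ((K : ℝ) / N) ≤ (K : ℝ) * klBer (d / K) ((n : ℝ) / N) := by
  have hK0' : (0:ℝ) < K := by exact_mod_cast hK0
  have hKn' : (K:ℝ) < n := by exact_mod_cast hKn
  have hn0 : (0:ℝ) < n := by linarith
  have hnN' : (n:ℝ) ≤ N := by exact_mod_cast hnN
  have hN0 : (0:ℝ) < N := by linarith
  have hnN2 : (n:ℝ) < N := by
    rcases lt_or_eq_of_le hnN' with h | h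
    · exact h
    · exfalso
      have hKeq : (n:ℝ) * K / N = K := by
        rw [← h]
        field_simp
      linarith
  have hd0 : 0 < d := lt_trans (by positivity) hd1
  have hNK : (0:ℝ) < N - K := by linarith
  have hNn : (0:ℝ) < N - n := by linarith
  have hKN1 : (0:ℝ) < 1 - (K:ℝ)/N := by
    rw [sub_pos, div_lt_one hN0]; linarith
  have hnN1 : (0:ℝ) < 1 - (n:ℝ)/N := by
    rw [sub_pos, div_lt_one hN0]; linarith
  -- expand LHS
  have e1 : (d / n) / ((K:ℝ) / N) = d * N / (n * K) := by
    field_simp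
    try ring
  have e2 : (1 - d / n) / (1 - (K:ℝ) / N) = (n - d) * N / (n * (N - K)) := by
    rw [div_eq_div_iff hKN1.ne' (by positivity)]
    field_simp
    try ring
  have e1' : (d / K) / ((n:ℝ) / N) = d * N / (n * K) := by
    field_simp
    try ring
  have e2' : (1 - d / K) / (1 - (n:ℝ) / N) = (K - d) * N / (K * (N - n)) := by
    rw [div_eq_div_iff hnN1.ne' (by positivity)]
    field_simp
    try ring
  have hL : (n:ℝ) * klBer (d / n) ((K:ℝ) / N) =
      d * Real.log (d * N / (n * K)) + (n - d) * Real.log ((n - d) * N / (n * (N - K))) := by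
    unfold klBer
    rw [e1, e2]
    field_simp
    try ring
  have hR : (K:ℝ) * klBer (d / K) ((n:ℝ) / N) =
      d * Real.log (d * N / (n * K)) + (K - d) * Real.log ((K - d) * N / (K * (N - n))) := by
    unfold klBer
    rw [e1', e2']
    field_simp
    try ring
  have hb : (0:ℝ) ≤ K - d := by linarith
  have hq : (0:ℝ) < K * (N - n) / N := by positivity
  have hc : (0:ℝ) ≤ (n:ℝ) - K := by linarith
  have hkey := key_ineq ((K:ℝ) - d) ((K:ℝ) * (N - n) / N) ((n:ℝ) - K) hb hq hc
  have ha : (K:ℝ) - d + ((n:ℝ) - K) = (n:ℝ) - d := by ring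
  have hpq : (K:ℝ) * (N - n) / N + ((n:ℝ) - K) = (n:ℝ) * (N - K) / N := by
    field_simp
    try ring
  rw [ha, hpq, div_div_eq_mul_div, div_div_eq_mul_div] at hkey
  rw [hL, hR]
  linarith [hkey]
end
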